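/- arXiv:2605.30138 — 3 statements merged into one kernel-verified Lean document; each statement's English description precedes it below -/
import Mathlib

section
/- Let (A, ≤) be a well-founded partial order. The ordinal rank of an element a in (A, ≤) equals the Cantor-Bendixson rank of a in the Alexandrov topology induced by the opposite order ≤ᵒᵖ. -/
open Filter

/-- The iterated Cantor-Bendixson derivative of a topological space:
`cbDeriv 0` is the whole space, `cbDeriv (α+1)` removes the isolated points of `cbDeriv α`,
and at limits one takes intersections.  (Equivalently, `cbDeriv α` is the set of points that
are accumulation points of `cbDeriv β` for every `β < α`.) -/
noncomputable def cbDeriv {X : Type*} [TopologicalSpace X] (α : Ordinal) : Set X :=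
  ⋂ β : Set.Iio α, {x | AccPt x (𝓟 (cbDeriv β.1))}
termination_by α
decreasing_by exact β.2

/-- The Cantor-Bendixson rank of a point: the least ordinal `α` such that the point is
isolated in the `α`-th Cantor-Bendixson derivative of the space. -/
noncomputable def cbRank {X : Type*} [TopologicalSpace X] (x : X) : Ordinal :=
  sInf {α | x ∈ cbDeriv α ∧ ¬ AccPt x (𝓟 (cbDeriv α))}

/-- The Alexandrov topology of the opposite order `≤ᵒᵖ`:
the open sets are the lower sets of the original order. -/
def alexandrovOpTopology (A : Type*) [Preorder A] : TopologicalSpace A where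
  IsOpen U := IsLowerSet U
  isOpen_univ := isLowerSet_univ
  isOpen_inter _ _ hU hV := hU.inter hV
  isOpen_sUnion _ h := isLowerSet_sUnion h

lemma nhds_alex {A : Type*} [Preorder A] (a : A) :
    @nhds A (alexandrovOpTopology A) a = 𝓟 (Set.Iic a) := by
  letI := alexandrovOpTopology A
  apply le_antisymm
  · exact le_principal_iff.2
      (IsOpen.mem_nhds (show IsOpen (Set.Iic a) from isLowerSet_Iic a) le_rfl)
  · rw [le_nhds_iff]
    intro s hs hso
    exact Filter.mem_principal.2 fun b hb => hso hb hs

lemma accPt_alex {A : Type*} [PartialOrder A] {a : A} {S : Set A} :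
    @AccPt A (alexandrovOpTopology A) a (𝓟 S) ↔ ∃ b < a, b ∈ S := by
  letI := alexandrovOpTopology A
  rw [AccPt, nhdsWithin, nhds_alex, inf_principal, inf_principal, neBot_iff, Ne,
    principal_eq_bot_iff]
  constructor
  · rintro h
    obtain ⟨b, hb⟩ := Set.nonempty_iff_ne_empty.2 h
    exact ⟨b, lt_of_le_of_ne hb.1.1 hb.1.2, hb.2⟩
  · rintro ⟨b, hb, hbS⟩
    exact Set.nonempty_iff_ne_empty.1 ⟨b, ⟨hb.le, hb.ne⟩, hbS⟩

lemma exists_of_lt_rank {A : Type*} [PartialOrder A] [WellFoundedLT A] {a : A} {β : Ordinal}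
    (h : β < IsWellFounded.rank (α := A) (· < ·) a) :
    ∃ b < a, β ≤ IsWellFounded.rank (α := A) (· < ·) b := by
  rw [IsWellFounded.rank_eq, Ordinal.lt_iSup_iff] at h
  obtain ⟨⟨b, hb⟩, h⟩ := h
  exact ⟨b, hb, Order.lt_succ_iff.1 h⟩

lemma mem_cbDeriv_alex' {A : Type*} [PartialOrder A] [WellFoundedLT A] (α : Ordinal) : ∀ a : A,
    a ∈ @cbDeriv A (alexandrovOpTopology A) α ↔ α ≤ IsWellFounded.rank (α := A) (· < ·) a := by
  letI := alexandrovOpTopology A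
  induction α using Ordinal.induction with
  | h α ih =>
    intro a
    rw [cbDeriv]
    simp only [Set.mem_iInter, Set.mem_setOf_eq]
    constructor
    · intro h
      by_contra hlt
      rw [not_le] at hlt
      have := h ⟨_, hlt⟩
      rw [accPt_alex] at this
      obtain ⟨b, hb, hbm⟩ := this
      exact absurd ((ih _ hlt b).1 hbm) (not_le.2 (IsWellFounded.rank_lt_of_rel hb))
    · intro h β
      rw [accPt_alex]
      obtain ⟨b, hb, hβb⟩ := exists_of_lt_rank (lt_of_lt_of_le β.2 h)
      exact ⟨b, hb, (ih _ β.2 b).2 hβb⟩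

/-- For a well-founded partial order `(A, ≤)`, the ordinal rank of an element equals its
Cantor-Bendixson rank in the Alexandrov topology induced by the opposite order. -/
theorem rank_eq_cbRank_alexandrovOp {A : Type*} [PartialOrder A] [WellFoundedLT A] (a : A) :
    IsWellFounded.rank (α := A) (· < ·) a = @cbRank A (alexandrovOpTopology A) a := by
  letI := alexandrovOpTopology A
  have mem_cbDeriv_alex := fun (α : Ordinal) (b : A) => mem_cbDeriv_alex' α b
  unfold cbRank
  have hmem : IsWellFounded.rank (α := A) (· < ·) a ∈
      {α | a ∈ cbDeriv α ∧ ¬ AccPt a (𝓟 (cbDeriv α))} := by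
    refine ⟨(mem_cbDeriv_alex _ a).2 le_rfl, ?_⟩
    rw [accPt_alex]
    rintro ⟨b, hb, hbm⟩
    exact absurd ((mem_cbDeriv_alex _ b).1 hbm)
      (not_le.2 (IsWellFounded.rank_lt_of_rel hb))
  apply le_antisymm
  · refine le_csInf ⟨_, hmem⟩ ?_
    rintro α ⟨-, hni⟩
    by_contra hlt
    rw [not_le] at hlt
    rw [accPt_alex] at hni
    obtain ⟨b, hb, hαb⟩ := exists_of_lt_rank hlt
    exact hni ⟨b, hb, (mem_cbDeriv_alex _ b).2 hαb⟩
  · exact csInf_le' hmem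
end

section
/- The ordinal rank of the lattice of marked quotients of (ℤ², ((1,0),(0,1))) is ω·2 + 1. -/
/-!
A subgroup of `ℤ²` is of finite index, cyclic, or trivial, according to whether the cross
product on it is somewhere nonzero. Enlarging a finite-index subgroup strictly lowers its index,
so its rank is finite. A nonzero cyclic `⟨v⟩` lies only in finite-index subgroups and in `⟨w⟩`
with `v = k w`, `|k| ≥ 2`, so `gcd(v)` strictly drops and its rank is at most `ω + gcd(v)`. Hence
every nonzero subgroup has rank `< ω·2`. Conversely the chains `ℤ × 2ⁿℤ` above `ℤ × 0` and
`2ⁿℤ × 0` above `0` give `rank (ℤ × 0) ≥ ω` and `rank 0 ≥ ω·2`. As `0` is the least element,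
the rank of the poset is `rank 0 + 1`.
-/

/-- Marked quotients of `(ℤ², ((1,0),(0,1)))` correspond to the subgroups of `ℤ²` (their
kernels), the marked-quotient order corresponding to reverse inclusion of kernels; this
order is well-founded since `ℤ²` is Noetherian. -/
instance : WellFoundedGT (AddSubgroup (ℤ × ℤ)) :=
  (AddSubgroup.toIntSubmodule : AddSubgroup (ℤ × ℤ) ≃o Submodule ℤ (ℤ × ℤ))
    |>.strictMono.wellFoundedGT

open Order IsWellFounded AddSubgroup
open scoped Ordinal

section RankGT

variable {α : Type*} [Preorder α] [WellFoundedGT α]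

theorem rank_gt_le_of_forall_lt {a : α} {o : Ordinal} (h : ∀ b, a < b → rank (· > ·) b < o) :
    rank (· > ·) a ≤ o := by
  rw [rank_eq]
  exact Ordinal.iSup_le fun b => succ_le_of_lt (h b b.2)

theorem rank_gt_add_natCast_le {f : ℕ → α} (hf : StrictAnti f) (n : ℕ) :
    rank (· > ·) (f 0) + n ≤ rank (· > ·) (f n) := by
  induction n with
  | zero => simp
  | succ n ih =>
    rw [Nat.cast_succ, ← add_assoc, ← succ_eq_add_one]
    exact succ_le_of_lt (ih.trans_lt (rank_lt_of_rel (hf n.lt_succ_self)))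

theorem rank_gt_add_omega0_le {f : ℕ → α} (hf : StrictAnti f) {a : α} (ha : ∀ n, a < f n) :
    rank (· > ·) (f 0) + ω ≤ rank (· > ·) a := by
  rw [Ordinal.add_le_iff_of_isSuccLimit Ordinal.isSuccLimit_omega0]
  intro d hd
  obtain ⟨n, rfl⟩ := Ordinal.lt_omega0.mp hd
  exact (rank_gt_add_natCast_le hf n).trans (rank_lt_of_rel (r := (· > ·)) (ha n)).le

theorem iSup_succ_rank_gt_eq_succ_rank_bot [OrderBot α] :
    ⨆ a : α, succ (rank (· > ·) a) = succ (rank (· > ·) (⊥ : α)) :=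
  le_antisymm
    (Ordinal.iSup_le fun _ => succ_le_succ <|
      rank_gt_le_of_forall_lt fun _ hb => rank_lt_of_rel (r := (· > ·)) (bot_le.trans_lt hb))
    (Ordinal.le_iSup _ ⊥)

end RankGT

namespace AddSubgroup

variable {G H : Type*} [AddGroup G] [AddGroup H]

theorem rank_gt_le_index [WellFoundedGT (AddSubgroup G)] (N : AddSubgroup G)
    [hN : N.FiniteIndex] : rank (· > ·) N ≤ N.index := by
  revert hN
  induction N using WellFoundedGT.induction with
  | _ N ih =>
    intro
    refine rank_gt_le_of_forall_lt fun M hM => ?_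
    have : M.FiniteIndex := finiteIndex_of_le hM.le
    exact (ih M hM).trans_lt (Nat.cast_lt.mpr (index_strictAnti hM))

theorem rank_gt_lt_omega0 [WellFoundedGT (AddSubgroup G)] (N : AddSubgroup G)
    [N.FiniteIndex] : rank (· > ·) N < ω :=
  (rank_gt_le_index N).trans_lt (Ordinal.natCast_lt_omega0 _)

theorem exists_two_le_natAbs_zsmul_eq_of_zmultiples_lt {v w : G} (hv : v ≠ 0)
    (h : zmultiples v < zmultiples w) : ∃ k : ℤ, 2 ≤ k.natAbs ∧ k • w = v := by
  obtain ⟨k, rfl⟩ := mem_zmultiples_iff.mp (zmultiples_le.mp h.le)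
  refine ⟨k, ?_, rfl⟩
  by_contra! hk
  obtain hk | hk | hk : k = 0 ∨ k = 1 ∨ k = -1 := by omega
  all_goals subst hk
  · exact hv (zero_zsmul w)
  · exact h.ne (by rw [one_zsmul])
  · exact h.ne (by rw [neg_one_zsmul, zmultiples_neg])

theorem prod_strictMono_right (A : AddSubgroup G) :
    StrictMono fun B : AddSubgroup H => A.prod B :=
  (prod_mono_right A).strictMono_of_injective fun B B' hBB' => by
    ext b
    simpa [mem_prod] using SetLike.ext_iff.mp hBB' (0, b)

theorem prod_strictMono_left (B : AddSubgroup H) :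
    StrictMono fun A : AddSubgroup G => A.prod B :=
  (prod_mono_left B).strictMono_of_injective fun A A' hAA' => by
    ext a
    simpa [mem_prod] using SetLike.ext_iff.mp hAA' (a, 0)

end AddSubgroup

theorem zmultiples_two_pow_strictAnti : StrictAnti fun n : ℕ => zmultiples ((2 : ℤ) ^ n) := by
  have h2 : ¬IsUnit (2 : ℤ) := by norm_num [Int.isUnit_iff]
  intro m n hmn
  simp only [lt_iff_le_not_ge, zmultiples_le, Int.mem_zmultiples_iff,
    pow_dvd_pow_iff two_ne_zero h2]
  omega

theorem bot_lt_zmultiples_two_pow (n : ℕ) : ⊥ < zmultiples ((2 : ℤ) ^ n) := by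
  simp [bot_lt_iff_ne_bot]

def cross (v w : ℤ × ℤ) : ℤ := v.1 * w.2 - v.2 * w.1

theorem cross_smul_eq (v w z : ℤ × ℤ) :
    cross v w • z = cross z w • v + cross v z • w := by
  ext <;> simp only [cross, Prod.smul_fst, Prod.smul_snd, Prod.fst_add, Prod.snd_add,
    smul_eq_mul] <;> ring

theorem finiteIndex_of_cross_ne_zero {N : AddSubgroup (ℤ × ℤ)} {v w : ℤ × ℤ}
    (hv : v ∈ N) (hw : w ∈ N) (h : cross v w ≠ 0) : N.FiniteIndex := by
  set d := cross v w
  have hdN : (zmultiples d).prod (zmultiples d) ≤ N := by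
    rintro ⟨_, _⟩ hz
    obtain ⟨⟨a, rfl⟩, ⟨b, rfl⟩⟩ := mem_prod.mp hz
    have : d • (a, b) ∈ N := by
      rw [cross_smul_eq]
      exact add_mem (zsmul_mem hv _) (zsmul_mem hw _)
    simpa [mul_comm] using this
  have : ((zmultiples d).prod (zmultiples d)).FiniteIndex :=
    ⟨by simp [index_prod, Int.index_zmultiples, h]⟩
  exact finiteIndex_of_le hdN

/-- For nonzero `v ∈ N`, `‖v‖² w = ⟨v, w⟩ v + (cross v w) (-v.2, v.1)`, so `w ↦ ⟨v, w⟩` is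
injective on `N`: `N` embeds in `ℤ`, hence is cyclic. -/
theorem exists_zmultiples_eq_of_cross_eq_zero {N : AddSubgroup (ℤ × ℤ)}
    (h : ∀ v ∈ N, ∀ w ∈ N, cross v w = 0) : ∃ v, zmultiples v = N := by
  obtain rfl | ⟨v, hvN, hv⟩ := N.bot_or_exists_ne_zero
  · exact ⟨0, zmultiples_zero_eq_bot⟩
  let dot : ℤ × ℤ →+ ℤ := AddMonoidHom.mk' (fun w => v.1 * w.1 + v.2 * w.2) fun _ _ => by
    simp only [Prod.fst_add, Prod.snd_add]
    ring
  have hv2 : v.1 ^ 2 + v.2 ^ 2 ≠ 0 := by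
    intro h0
    apply hv
    ext <;> simp only [Prod.fst_zero, Prod.snd_zero] <;> nlinarith
  have hinj : Function.Injective (dot.comp N.subtype) := by
    refine (injective_iff_map_eq_zero _).mpr fun ⟨w, hwN⟩ hw => ?_
    have hvw : v.1 * w.2 - v.2 * w.1 = 0 := h v hvN w hwN
    replace hw : v.1 * w.1 + v.2 * w.2 = 0 := hw
    have h1 : (v.1 ^ 2 + v.2 ^ 2) * w.1 = 0 := by linear_combination v.1 * hw - v.2 * hvw
    have h2 : (v.1 ^ 2 + v.2 ^ 2) * w.2 = 0 := by linear_combination v.2 * hw + v.1 * hvw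
    ext
    · exact (mul_eq_zero.mp h1).resolve_left hv2
    · exact (mul_eq_zero.mp h2).resolve_left hv2
  have := isAddCyclic_of_injective _ hinj
  exact N.isAddCyclic_iff_exists_zmultiples_eq_top.mp this

theorem finiteIndex_or_exists_zmultiples_eq (N : AddSubgroup (ℤ × ℤ)) :
    N.FiniteIndex ∨ ∃ v, zmultiples v = N := by
  by_cases h : ∀ v ∈ N, ∀ w ∈ N, cross v w = 0
  · exact .inr (exists_zmultiples_eq_of_cross_eq_zero h)
  · push Not at h
    obtain ⟨v, hv, w, hw, hvw⟩ := h
    exact .inl (finiteIndex_of_cross_ne_zero hv hw hvw)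

theorem rank_zmultiples_le {v : ℤ × ℤ} (hv : v ≠ 0) :
    rank (· > ·) (zmultiples v) ≤ ω + Int.gcd v.1 v.2 := by
  induction hn : Int.gcd v.1 v.2 using Nat.strong_induction_on generalizing v with
  | _ n ih =>
  refine rank_gt_le_of_forall_lt fun M hM => ?_
  obtain hfin | ⟨w, rfl⟩ := finiteIndex_or_exists_zmultiples_eq M
  · exact (rank_gt_lt_omega0 M).trans_le le_self_add
  obtain ⟨k, hk, rfl⟩ := exists_two_le_natAbs_zsmul_eq_of_zmultiples_lt hv hM
  have hw : w ≠ 0 := by rintro rfl; exact hv (smul_zero k)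
  have hgcd_pos : 0 < Int.gcd w.1 w.2 := by
    simpa [Nat.pos_iff_ne_zero, Int.gcd_eq_zero_iff, Prod.ext_iff] using hw
  have hlt : Int.gcd w.1 w.2 < n := by
    rw [← hn, Prod.smul_fst, Prod.smul_snd, smul_eq_mul, smul_eq_mul, Int.gcd_mul_left]
    exact lt_mul_left hgcd_pos (by omega)
  calc rank (· > ·) (zmultiples w) ≤ ω + Int.gcd w.1 w.2 := ih _ hlt hw rfl
    _ < ω + n := add_lt_add_right (Nat.cast_lt.mpr hlt) ω

theorem rank_lt_omega0_mul_two_of_ne_bot {N : AddSubgroup (ℤ × ℤ)} (hN : N ≠ ⊥) :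
    rank (· > ·) N < ω * 2 := by
  rw [Ordinal.mul_two]
  obtain hfin | ⟨v, rfl⟩ := finiteIndex_or_exists_zmultiples_eq N
  · exact (rank_gt_lt_omega0 N).trans_le le_self_add
  have hv : v ≠ 0 := by rintro rfl; exact hN zmultiples_zero_eq_bot
  exact (rank_zmultiples_le hv).trans_lt
    (add_lt_add_right (Ordinal.natCast_lt_omega0 _) ω)

theorem omega0_le_rank_top_prod_bot :
    ω ≤ rank (· > ·) ((⊤ : AddSubgroup ℤ).prod (⊥ : AddSubgroup ℤ)) :=
  le_add_self.trans <| rank_gt_add_omega0_le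
    ((prod_strictMono_right ⊤).comp_strictAnti zmultiples_two_pow_strictAnti)
    fun n => prod_strictMono_right ⊤ (bot_lt_zmultiples_two_pow n)

theorem omega0_mul_two_le_rank_bot :
    ω * 2 ≤ rank (· > ·) (⊥ : AddSubgroup (ℤ × ℤ)) := by
  have hf := (prod_strictMono_left (⊥ : AddSubgroup ℤ)).comp_strictAnti
    zmultiples_two_pow_strictAnti
  have hbot := rank_gt_add_omega0_le hf fun n =>
    prod_strictMono_left ⊥ (bot_lt_zmultiples_two_pow n)
  simp only [Function.comp_apply, pow_zero, Int.zmultiples_one, bot_prod_bot] at hbot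
  rw [Ordinal.mul_two]
  exact (add_le_add_left omega0_le_rank_top_prod_bot ω).trans hbot

theorem rank_bot_eq_omega0_mul_two : rank (· > ·) (⊥ : AddSubgroup (ℤ × ℤ)) = ω * 2 :=
  le_antisymm (rank_gt_le_of_forall_lt fun _ hN => rank_lt_omega0_mul_two_of_ne_bot hN.ne')
    omega0_mul_two_le_rank_bot

/-- The ordinal rank of the lattice of marked quotients of `(ℤ², ((1,0),(0,1)))` is `ω·2 + 1`.
Here a marked quotient is identified with its kernel, a subgroup `N` of `ℤ²`; `N` lies below
`M` in the marked-quotient order iff `N ⊋ M`, i.e. iff `N > M`, and the rank of the poset is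
`sup { rank N + 1 }`. -/
theorem rank_markedQuotients_ZxZ :
    (⨆ N : AddSubgroup (ℤ × ℤ),
        Order.succ (IsWellFounded.rank (α := AddSubgroup (ℤ × ℤ)) (· > ·) N)) =
      Ordinal.omega0 * 2 + 1 := by
  rw [iSup_succ_rank_gt_eq_succ_rank_bot, rank_bot_eq_omega0_mul_two, succ_eq_add_one]
end

section
/- ℤ equipped with the profinite topology is homeomorphic to ℚ with its standard (Euclidean, order) topology. -/
/-!
Write integers in the factorial number system: the `i`-th digit of `x` is `x % (i+1)! / i!`, which
lies in `{0, …, i}`, and `x ≡ y [ZMOD n!]` exactly when the first `n` digits of `x` and `y` agree.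
Order `ℤ` lexicographically by digit sequences, with the order of the digits reversed at odd
positions. The classes `x + n!ℤ` are then order-convex, and a strict inequality is decided by
finitely many digits, so it persists on such classes: hence the order topology is the profinite
topology. The twist makes the order dense without endpoints: the high digits of `x` are all `0`
(for `x ≥ 0`) or all maximal (for `x < 0`), so they can be moved by one in only one direction,
which the twist turns upwards at one parity and downwards at the other. By Cantor's theorem the
order, hence the topology, is that of `ℚ`.
-/

/-- The profinite topology on `ℤ`: the topology generated by the arithmetic progressions
`z + kℤ` for `z ∈ ℤ` and `k ≥ 1`. -/
def profiniteTopologyZ : TopologicalSpace ℤ :=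
  TopologicalSpace.generateFrom
    {U | ∃ z k : ℤ, 1 ≤ k ∧ U = {x : ℤ | ∃ m : ℤ, x = z + k * m}}

open Nat Set

namespace Pi

variable {ι : Type*} {β : ι → Type*} [LinearOrder ι] [WellFoundedLT ι]
  [∀ i, LinearOrder (β i)]

theorem ordConnected_setOf_forall_lt_eq (x : ∀ i, β i) (i : ι) :
    OrdConnected {y : Lex (∀ i, β i) | ∀ j < i, ofLex y j = x j} := by
  refine ⟨fun a ha b hb y ⟨hay, hyb⟩ j => ?_⟩
  induction j using WellFoundedLT.induction with
  | _ j ih =>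
    intro hj
    have hay_eq : ∀ k < j, ofLex a k = ofLex y k := fun k hk =>
      (ha k (hk.trans hj)).trans (ih k hk (hk.trans hj)).symm
    have hyb_eq : ∀ k < j, ofLex y k = ofLex b k := fun k hk =>
      (ih k hk (hk.trans hj)).trans (hb k (hk.trans hj)).symm
    exact le_antisymm ((apply_le_of_toLex hyb hyb_eq).trans (hb j hj).le)
      ((ha j hj).symm.le.trans (apply_le_of_toLex hay hay_eq))

end Pi

namespace Int

theorem setOf_modEq_eq (x k : ℤ) : {y | y ≡ x [ZMOD k]} = {y | ∃ m, y = x + k * m} := by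
  ext y
  exact modEq_comm.trans (modEq_iff_dvd.trans (exists_congr fun _ => sub_eq_iff_eq_add'))

def factorialDigit (i : ℕ) (x : ℤ) : ℤ := x % (i + 1)! / i !

theorem natCast_factorial_dvd_factorial {m n : ℕ} (h : m ≤ n) : (m ! : ℤ) ∣ n ! := by
  exact_mod_cast Nat.factorial_dvd_factorial h

theorem modEq_factorial_succ_iff {i : ℕ} {x y : ℤ} :
    x ≡ y [ZMOD (i + 1)!] ↔ x ≡ y [ZMOD i !] ∧ factorialDigit i x = factorialDigit i y := by
  have hdvd := natCast_factorial_dvd_factorial (Nat.le_succ i)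
  have hx := mul_ediv_add_emod (x % (i + 1)!) i !
  have hy := mul_ediv_add_emod (y % (i + 1)!) i !
  rw [emod_emod_of_dvd x hdvd] at hx
  rw [emod_emod_of_dvd y hdvd] at hy
  refine ⟨fun h => ⟨h.of_dvd hdvd, congrArg (· / (i ! : ℤ)) h⟩, fun ⟨h, hd⟩ => ?_⟩
  unfold factorialDigit at hd
  unfold Int.ModEq at h ⊢
  rw [← hx, ← hy, hd, h]

theorem modEq_factorial_iff {n : ℕ} {x y : ℤ} :
    x ≡ y [ZMOD n !] ↔ ∀ j < n, factorialDigit j x = factorialDigit j y := by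
  induction n with
  | zero => simp [Int.modEq_one]
  | succ n ih => rw [modEq_factorial_succ_iff, ih, Nat.forall_lt_succ_right]

theorem eq_of_forall_modEq_factorial {x y : ℤ} (h : ∀ n : ℕ, x ≡ y [ZMOD n !]) : x = y := by
  have hlt : (y - x).natAbs < ((y - x).natAbs + 1)! :=
    (Nat.lt_succ_self _).trans_le (Nat.self_le_factorial _)
  have := eq_zero_of_dvd_of_natAbs_lt_natAbs ((h _).dvd) (by simpa using hlt)
  omega

theorem factorialDigit_mul_factorial_add {M : ℕ} {c r : ℤ} (hc₀ : 0 ≤ c) (hcM : c ≤ M)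
    (hr₀ : 0 ≤ r) (hrM : r < M !) : factorialDigit M (c * M ! + r) = c := by
  have hM : (0 : ℤ) < M ! := by exact_mod_cast M.factorial_pos
  have hlt : c * M ! + r < (M + 1)! := by
    rw [Nat.factorial_succ]; push_cast; nlinarith
  rw [factorialDigit, emod_eq_of_lt (by positivity) hlt, add_comm, add_mul_ediv_right _ _ hM.ne',
    ediv_eq_zero_of_lt hr₀ hrM, zero_add]

theorem factorialDigit_add_factorial_succ (M : ℕ) (x : ℤ) :
    factorialDigit M (x + (M + 1)!) = factorialDigit M x := by
  rw [factorialDigit, ← emod_eq_add_self_emod, factorialDigit]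

theorem exists_factorialDigit_step (x : ℤ) : ∃ s : ℤ, (s = 1 ∨ s = -1) ∧ ∀ M : ℕ, x.natAbs < M →
    ∃ y, y ≡ x [ZMOD M !] ∧ factorialDigit M y = factorialDigit M x + s := by
  rcases le_or_gt 0 x with hx | hx
  · refine ⟨1, Or.inl rfl, fun M hM => ⟨x + M !, by simp [Int.ModEq], ?_⟩⟩
    have hxM : x < M ! := by have := M.self_le_factorial; omega
    have h₀ := factorialDigit_mul_factorial_add le_rfl (Nat.cast_nonneg M) hx hxM
    have h₁ := factorialDigit_mul_factorial_add zero_le_one (by omega) hx hxM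
    simp only [zero_mul, zero_add, one_mul] at h₀ h₁
    rw [add_comm, h₁, h₀, zero_add]
  · refine ⟨-1, Or.inr rfl, fun M hM => ⟨x - M !, by simp [Int.ModEq], ?_⟩⟩
    have hr₀ : 0 ≤ x + M ! := by have := M.self_le_factorial; omega
    have hrM : x + M ! < M ! := by omega
    have hsucc : ((M + 1)! : ℤ) = M * M ! + M ! := by
      rw [Nat.factorial_succ]; push_cast; ring
    have h₀ := factorialDigit_mul_factorial_add (Nat.cast_nonneg M) le_rfl hr₀ hrM
    have h₁ := factorialDigit_mul_factorial_add (c := M - 1) (by omega) (by omega) hr₀ hrM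
    have e₀ : x + (M + 1)! = M * M ! + (x + M !) := by rw [hsucc]; ring
    have e₁ : x - M ! + (M + 1)! = (M - 1) * M ! + (x + M !) := by rw [hsucc]; ring
    rw [← factorialDigit_add_factorial_succ M x, ← factorialDigit_add_factorial_succ M (x - M !),
      e₀, e₁, h₀, h₁]
    ring

def twistedFactorialDigits (x : ℤ) (i : ℕ) : ℤ := (-1) ^ i * factorialDigit i x

theorem twistedFactorialDigits_eq_iff {x y : ℤ} {i : ℕ} :
    twistedFactorialDigits x i = twistedFactorialDigits y i ↔
      factorialDigit i x = factorialDigit i y :=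
  mul_right_inj' (pow_ne_zero i (by norm_num))

theorem modEq_factorial_iff_twistedFactorialDigits {n : ℕ} {x y : ℤ} :
    x ≡ y [ZMOD n !] ↔ ∀ j < n, twistedFactorialDigits x j = twistedFactorialDigits y j := by
  simp only [twistedFactorialDigits_eq_iff, modEq_factorial_iff]

theorem twistedFactorialDigits_eq_of_modEq {x y : ℤ} {i : ℕ} (h : x ≡ y [ZMOD (i + 1)!]) :
    twistedFactorialDigits x i = twistedFactorialDigits y i :=
  twistedFactorialDigits_eq_iff.mpr (modEq_factorial_succ_iff.mp h).2

theorem twistedFactorialDigits_injective : Function.Injective twistedFactorialDigits :=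
  fun _ _ h => eq_of_forall_modEq_factorial fun _ =>
    modEq_factorial_iff_twistedFactorialDigits.mpr fun j _ => congrFun h j

theorem exists_twistedFactorialDigits_step (x : ℤ) (n : ℕ) {t : ℤ} (ht : t = 1 ∨ t = -1) :
    ∃ M, n ≤ M ∧ ∃ y, y ≡ x [ZMOD M !] ∧
      twistedFactorialDigits y M = twistedFactorialDigits x M + t := by
  obtain ⟨s, hs, hstep⟩ := exists_factorialDigit_step x
  have hshift : ∀ M, x.natAbs < M → (-1) ^ M * s = t → ∃ y, y ≡ x [ZMOD M !] ∧
      twistedFactorialDigits y M = twistedFactorialDigits x M + t := fun M hM hMt => by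
    obtain ⟨y, hy, hdigit⟩ := hstep M hM
    exact ⟨y, hy, by rw [twistedFactorialDigits, twistedFactorialDigits, hdigit, ← hMt]; ring⟩
  set K := n + x.natAbs + 1
  rcases neg_one_pow_eq_or ℤ K with hK | hK
  · by_cases hst : s = t
    · exact ⟨K, by omega, hshift K (by omega) (by rw [hK, one_mul, hst])⟩
    · exact ⟨K + 1, by omega, hshift (K + 1) (by omega) (by rw [pow_succ, hK]; omega)⟩
  · by_cases hst : s = -t
    · exact ⟨K, by omega, hshift K (by omega) (by rw [hK, hst]; ring)⟩
    · exact ⟨K + 1, by omega, hshift (K + 1) (by omega) (by rw [pow_succ, hK]; omega)⟩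

end Int

def ProfiniteInt : Type := ℤ

namespace ProfiniteInt

open Int

instance : TopologicalSpace ProfiniteInt := profiniteTopologyZ
instance : Countable ProfiniteInt := inferInstanceAs (Countable ℤ)
instance : Nonempty ProfiniteInt := inferInstanceAs (Nonempty ℤ)

noncomputable instance : LinearOrder ProfiniteInt :=
  LinearOrder.lift' (fun x : ℤ => toLex (twistedFactorialDigits x))
    twistedFactorialDigits_injective

theorem lt_iff_exists_modEq {x y : ProfiniteInt} : x < y ↔
    ∃ M : ℕ, x ≡ y [ZMOD M !] ∧ twistedFactorialDigits x M < twistedFactorialDigits y M :=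
  exists_congr fun _ => (and_congr_left' modEq_factorial_iff_twistedFactorialDigits).symm

theorem exists_forall_modEq_lt {x y : ProfiniteInt} (h : x < y) : ∃ n : ℕ,
    ∀ x' y' : ProfiniteInt, x' ≡ x [ZMOD n !] → y' ≡ y [ZMOD n !] → x' < y' := by
  obtain ⟨M, hxy, hlt⟩ := lt_iff_exists_modEq.mp h
  refine ⟨M + 1, fun x' y' hx hy => lt_iff_exists_modEq.mpr ⟨M, ?_, ?_⟩⟩
  · have hdvd := natCast_factorial_dvd_factorial (Nat.le_succ M)
    exact (hx.of_dvd hdvd).trans (hxy.trans (hy.of_dvd hdvd).symm)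
  · rwa [twistedFactorialDigits_eq_of_modEq hx, twistedFactorialDigits_eq_of_modEq hy]

theorem ordConnected_setOf_modEq (x : ProfiniteInt) (n : ℕ) :
    OrdConnected {y : ProfiniteInt | y ≡ x [ZMOD n !]} := by
  convert (Pi.ordConnected_setOf_forall_lt_eq (twistedFactorialDigits x) n).preimage_mono
    (f := fun y : ProfiniteInt => toLex (twistedFactorialDigits y)) fun _ _ h => h using 1
  ext y
  exact modEq_factorial_iff_twistedFactorialDigits

theorem exists_gt_modEq (x : ProfiniteInt) (n : ℕ) : ∃ y, x < y ∧ y ≡ x [ZMOD n !] := by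
  obtain ⟨M, hnM, y, hy, hstep⟩ := exists_twistedFactorialDigits_step x n (Or.inl rfl)
  exact ⟨y, lt_iff_exists_modEq.mpr ⟨M, hy.symm, by omega⟩,
    hy.of_dvd (natCast_factorial_dvd_factorial hnM)⟩

theorem exists_lt_modEq (x : ProfiniteInt) (n : ℕ) : ∃ y, y < x ∧ y ≡ x [ZMOD n !] := by
  obtain ⟨M, hnM, y, hy, hstep⟩ := exists_twistedFactorialDigits_step x n (Or.inr rfl)
  exact ⟨y, lt_iff_exists_modEq.mpr ⟨M, hy, by omega⟩,
    hy.of_dvd (natCast_factorial_dvd_factorial hnM)⟩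

instance : NoMaxOrder ProfiniteInt := ⟨fun x => (exists_gt_modEq x 0).imp fun _ h => h.1⟩

instance : NoMinOrder ProfiniteInt := ⟨fun x => (exists_lt_modEq x 0).imp fun _ h => h.1⟩

instance : DenselyOrdered ProfiniteInt := ⟨fun a b hab => by
  obtain ⟨n, hn⟩ := exists_forall_modEq_lt hab
  obtain ⟨c, hac, hca⟩ := exists_gt_modEq a n
  exact ⟨c, hac, hn c b hca (Int.ModEq.refl b)⟩⟩

theorem exists_Ioo_subset_modEq (x : ProfiniteInt) (n : ℕ) :
    ∃ a b, x ∈ Ioo a b ∧ Ioo a b ⊆ {y | y ≡ x [ZMOD n !]} := by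
  obtain ⟨a, hax, ha⟩ := exists_lt_modEq x n
  obtain ⟨b, hxb, hb⟩ := exists_gt_modEq x n
  exact ⟨a, b, ⟨hax, hxb⟩,
    Ioo_subset_Icc_self.trans ((ordConnected_setOf_modEq x n).out ha hb)⟩

theorem isOpen_setOf_modEq (x : ProfiniteInt) {k : ℤ} (hk : 1 ≤ k) :
    IsOpen {y : ProfiniteInt | y ≡ x [ZMOD k]} :=
  TopologicalSpace.isOpen_generateFrom_of_mem ⟨x, k, hk, setOf_modEq_eq x k⟩

instance : OrderTopology ProfiniteInt := by
  refine ⟨le_antisymm (le_generateFrom ?_) (le_generateFrom ?_)⟩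
  · have hfact (n : ℕ) : (1 : ℤ) ≤ n ! := by exact_mod_cast n.factorial_pos
    rintro _ ⟨a, rfl | rfl⟩ <;> refine isOpen_iff_forall_mem_open.mpr fun x hx => ?_
    · obtain ⟨n, hn⟩ := exists_forall_modEq_lt (mem_Ioi.mp hx)
      exact ⟨_, fun y hy => hn a y (Int.ModEq.refl a) hy, isOpen_setOf_modEq x (hfact n),
        Int.ModEq.refl x⟩
    · obtain ⟨n, hn⟩ := exists_forall_modEq_lt (mem_Iio.mp hx)
      exact ⟨_, fun y hy => hn y a hy (Int.ModEq.refl a), isOpen_setOf_modEq x (hfact n),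
        Int.ModEq.refl x⟩
  · let := Preorder.topology ProfiniteInt
    have : OrderTopology ProfiniteInt := ⟨rfl⟩
    rintro _ ⟨z, k, hk, rfl⟩
    rw [← setOf_modEq_eq]
    refine isOpen_iff_forall_mem_open.mpr fun x hx => ?_
    obtain ⟨a, b, hxab, hsub⟩ := exists_Ioo_subset_modEq x k.natAbs
    have hk_dvd : k ∣ (k.natAbs)! :=
      natAbs_dvd.mp (natCast_dvd_natCast.mpr (Nat.dvd_factorial (by omega) le_rfl))
    exact ⟨Ioo a b, fun y hy => ((hsub hy).of_dvd hk_dvd).trans hx, isOpen_Ioo, hxab⟩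

end ProfiniteInt

/-- `ℤ` equipped with the profinite topology is homeomorphic to `ℚ` with its standard
(Euclidean) topology. -/
theorem profiniteZ_homeomorph_rat :
    Nonempty (@Homeomorph ℤ ℚ profiniteTopologyZ inferInstance) := by
  obtain ⟨e⟩ := Order.iso_of_countable_dense ProfiniteInt ℚ
  exact ⟨e.toHomeomorph⟩
end
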